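/- Let L ⊆ S be irreducible spherical, s, t, p consecutive vertices in the Coxeter–Dynkin diagram of L, and r ∈ S with {s,t,p,r} not spherical. Assume S is 3-rigid and of type FC. If {s,t} is not good with respect to r and p is not good with respect to r, then no element of S∖({s,t,p} ∪ {s,t,p}^⊥) is adjacent to t or to p in the defining graph. -/
import Mathlib


/-- A Coxeter matrix on the set `S` of generators: symmetric, `1` on the diagonal,
never `1` off the diagonal; the value `0` stands for `∞`. -/
structure CoxMat (S : Type*) where
  m : S → S → ℕ
  symm : ∀ a b, m a b = m b a
  diag : ∀ a, m a a = 1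
  offDiag : ∀ a b, a ≠ b → m a b ≠ 1

namespace CoxMat

variable {S : Type*} (C : CoxMat S)

/-- Adjacency in the defining graph: `a ≠ b` and `⟨a,b⟩` is finite (label `≠ ∞`). -/
def Adj (a b : S) : Prop := a ≠ b ∧ C.m a b ≠ 0

/-- `J^⊥`: the elements of `S ∖ J` commuting with every element of `J`. -/
def perp (J : Set S) : Set S := {a | a ∉ J ∧ ∀ j ∈ J, C.m a j = 2}

/-- For a Coxeter generating set of type FC, a subset is spherical if and only if its
elements are pairwise adjacent in the defining graph. -/
def Spherical (J : Set S) : Prop := J.Pairwise C.Adj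

/-- `J` is irreducible: it is not contained in `K ∪ K^⊥` for a non-empty proper `K ⊂ J`. -/
def Irred (J : Set S) : Prop :=
  ∀ K : Set S, K ⊂ J → K.Nonempty → ¬ J ⊆ K ∪ C.perp K

/-- `a` and `b` lie in the same connected component of the subgraph of the defining
graph induced on the complement of `X`. -/
def SameComp (X : Set S) (a b : S) : Prop :=
  a ∉ X ∧ b ∉ X ∧ Relation.ReflTransGen (fun x y => x ∉ X ∧ y ∉ X ∧ C.Adj x y) a b

/-- The element `t ∈ L` is good with respect to `r`: `r ≠ t`, `r` is not adjacent to `t`,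
and `L ∖ (t ∪ t^⊥)` is non-empty and in the same component of `S ∖ (t ∪ t^⊥)` as `r`. -/
def GoodElt (L : Set S) (r t : S) : Prop :=
  r ≠ t ∧ ¬ C.Adj r t ∧ (L \ ({t} ∪ C.perp {t})).Nonempty ∧
    ∀ l ∈ L \ ({t} ∪ C.perp {t}), C.SameComp ({t} ∪ C.perp {t}) l r

/-- The non-commuting pair `{s,t} ⊆ L` is good with respect to `r`: `{s,t,r}` is not
spherical, and `L ∖ ({s,t} ∪ {s,t}^⊥)` is non-empty and in the same component of
`S ∖ ({s,t} ∪ {s,t}^⊥)` as `r`. -/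
def GoodPair (L : Set S) (r s t : S) : Prop :=
  ¬ C.Spherical {s, t, r} ∧ (L \ ({s, t} ∪ C.perp {s, t})).Nonempty ∧
    ∀ l ∈ L \ ({s, t} ∪ C.perp {s, t}), C.SameComp ({s, t} ∪ C.perp {s, t}) l r

/-- `S` is 3-rigid: no irreducible spherical subset of size `≥ 3` weakly separates `S`,
i.e. for any such `J` the subgraph induced on `S ∖ (J ∪ J^⊥)` is connected (or empty). -/
def ThreeRigid : Prop :=
  ∀ J : Set S, C.Spherical J → C.Irred J → 3 ≤ J.ncard →
    ∀ a b : S, a ∉ J ∪ C.perp J → b ∉ J ∪ C.perp J → C.SameComp (J ∪ C.perp J) a b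

/-- `s, t, p` are consecutive vertices in the Coxeter–Dynkin diagram of `L`. -/
def Consecutive (L : Set S) (s t p : S) : Prop :=
  s ∈ L ∧ t ∈ L ∧ p ∈ L ∧ s ≠ t ∧ t ≠ p ∧ s ≠ p ∧
    C.m s t ≠ 2 ∧ C.m t p ≠ 2 ∧ C.m s p = 2

/-- `L` is exposed: `|L| ≤ 2`, or `|L| = 3` and at least two elements of `L` are
adjacent to no element of `S ∖ (L ∪ L^⊥)`. -/
def Exposed (L : Set S) : Prop :=
  L.ncard ≤ 2 ∨ (L.ncard = 3 ∧ ∃ a ∈ L, ∃ b ∈ L, a ≠ b ∧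
    (∀ k, k ∉ L ∪ C.perp L → ¬ C.Adj a k) ∧ (∀ k, k ∉ L ∪ C.perp L → ¬ C.Adj b k))

end CoxMat


namespace CoxMat

theorem adj_symm' {S : Type*} (C : CoxMat S) {a b : S} (h : C.Adj a b) : C.Adj b a :=
  ⟨h.1.symm, by rw [C.symm]; exact h.2⟩

end CoxMat

/-- Let `L` be irreducible spherical, `s, t, p` consecutive vertices in the
Coxeter–Dynkin diagram of `L`, and `r ∈ S` with `{s,t,p,r}` not spherical; assume `S`
is 3-rigid. If `{s,t}` is not good with respect to `r` and `p` is not good with respect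
to `r`, then no element of `S ∖ ({s,t,p} ∪ {s,t,p}^⊥)` is adjacent to `t` or to `p`. -/
theorem good_pair_jump_new {S : Type*} (C : CoxMat S)
    (hrig : C.ThreeRigid) (L : Set S)
    (hsph : C.Spherical L) (hirr : C.Irred L)
    (s t p r : S) (hcons : C.Consecutive L s t p)
    (hr : ¬ C.Spherical {s, t, p, r})
    (hst : ¬ C.GoodPair L r s t) (hp : ¬ C.GoodElt L r p) :
    ∀ k, k ∉ ({s, t, p} : Set S) ∪ C.perp {s, t, p} →
      ¬ C.Adj k t ∧ ¬ C.Adj k p := by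
  classical
  obtain ⟨hsL, htL, hpL, hnst, hntp, hnsp, hmst, hmtp, hmsp⟩ := hcons
  have adjst : C.Adj s t := hsph hsL htL hnst
  have adjtp : C.Adj t p := hsph htL hpL hntp
  have adjsp : C.Adj s p := hsph hsL hpL hnsp
  have hrmem : r ∉ ({s, t, p} : Set S) := by
    intro hmem
    apply hr
    apply hsph.mono
    intro x hx
    simp only [Set.mem_insert_iff, Set.mem_singleton_iff] at hx hmem
    rcases hx with rfl | rfl | rfl | rfl
    · exact hsL
    · exact htL
    · exact hpL
    · rcases hmem with rfl | rfl | rfl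
      · exact hsL
      · exact htL
      · exact hpL
  have hrs : r ≠ s := fun h => hrmem (by simp [h])
  have hrt : r ≠ t := fun h => hrmem (by simp [h])
  have hrp : r ≠ p := fun h => hrmem (by simp [h])
  set Xst : Set S := ({s, t} : Set S) ∪ C.perp {s, t} with hXst_def
  set Xp : Set S := ({p} : Set S) ∪ C.perp {p} with hXp_def
  set X3 : Set S := ({s, t, p} : Set S) ∪ C.perp {s, t, p} with hX3_def
  have hpXst : p ∉ Xst := by
    rw [hXst_def]
    rintro (hmem | hmem)
    · simp only [Set.mem_insert_iff, Set.mem_singleton_iff] at hmem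
      rcases hmem with rfl | rfl
      · exact hnsp rfl
      · exact hntp rfl
    · exact hmtp ((C.symm t p).trans (hmem.2 t (by simp)))
  have htXp : t ∉ Xp := by
    rw [hXp_def]
    rintro (hmem | hmem)
    · exact hntp (by simpa using hmem)
    · exact hmtp (hmem.2 p (by simp))
  have hGP : ¬ C.Spherical {s, t, r} → r ∉ Xst →
      Relation.ReflTransGen (fun x y => x ∉ Xst ∧ y ∉ Xst ∧ C.Adj x y) p r → False := by
    intro h1 hr1 hchain
    apply hst
    refine ⟨h1, ⟨p, hpL, hpXst⟩, fun l hl => ⟨hl.2, hr1, ?_⟩⟩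
    rcases eq_or_ne l p with rfl | hne
    · exact hchain
    · exact Relation.ReflTransGen.head ⟨hl.2, hpXst, hsph hl.1 hpL hne⟩ hchain
  have hGE : r ∉ Xp →
      Relation.ReflTransGen (fun x y => x ∉ Xp ∧ y ∉ Xp ∧ C.Adj x y) t r →
      ¬ C.Adj r p → False := by
    intro hr1 hchain hnadj
    apply hp
    refine ⟨hrp, hnadj, ⟨t, htL, htXp⟩, fun l hl => ⟨hl.2, hr1, ?_⟩⟩
    rcases eq_or_ne l t with rfl | hne
    · exact hchain
    · exact Relation.ReflTransGen.head ⟨hl.2, htXp, hsph hl.1 htL hne⟩ hchain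
  have hnrp : ¬ C.Adj r p := by
    intro hadj
    have h1 : ¬ C.Spherical {s, t, r} := by
      have hdisj : ¬ C.Adj r s ∨ ¬ C.Adj r t := by
        by_contra hcon
        push_neg at hcon
        apply hr
        intro x hx y hy hxy
        simp only [Set.mem_insert_iff, Set.mem_singleton_iff] at hx hy
        rcases hx with rfl | rfl | rfl | rfl <;> rcases hy with rfl | rfl | rfl | rfl <;>
          first
            | exact absurd rfl hxy
            | exact adjst
            | exact C.adj_symm' adjst
            | exact adjtp
            | exact C.adj_symm' adjtp
            | exact adjsp
            | exact C.adj_symm' adjsp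
            | exact hcon.1
            | exact C.adj_symm' hcon.1
            | exact hcon.2
            | exact C.adj_symm' hcon.2
            | exact hadj
            | exact C.adj_symm' hadj
      intro hsp2
      rcases hdisj with h | h
      · exact h (hsp2 (by simp) (by simp) hrs)
      · exact h (hsp2 (by simp) (by simp) hrt)
    have hrXst : r ∉ Xst := by
      rw [hXst_def]
      rintro (hmem | hmem)
      · simp only [Set.mem_insert_iff, Set.mem_singleton_iff] at hmem
        rcases hmem with rfl | rfl
        · exact hrs rfl
        · exact hrt rfl
      · apply h1
        have hads : C.Adj r s := ⟨hrs, by rw [hmem.2 s (by simp)]; omega⟩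
        have hadt : C.Adj r t := ⟨hrt, by rw [hmem.2 t (by simp)]; omega⟩
        intro x hx y hy hxy
        simp only [Set.mem_insert_iff, Set.mem_singleton_iff] at hx hy
        rcases hx with rfl | rfl | rfl <;> rcases hy with rfl | rfl | rfl <;>
          first
            | exact absurd rfl hxy
            | exact adjst
            | exact C.adj_symm' adjst
            | exact hads
            | exact C.adj_symm' hads
            | exact hadt
            | exact C.adj_symm' hadt
    exact hGP h1 hrXst (Relation.ReflTransGen.single ⟨hpXst, hrXst, C.adj_symm' hadj⟩)
  have hnrt : ¬ C.Adj r t := by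
    intro hadj
    have hrXp : r ∉ Xp := by
      rw [hXp_def]
      rintro (hmem | hmem)
      · exact hrp (by simpa using hmem)
      · exact hnrp ⟨hrp, by rw [hmem.2 p (by simp)]; omega⟩
    exact hGE hrXp (Relation.ReflTransGen.single ⟨htXp, hrXp, C.adj_symm' hadj⟩) hnrp
  have hrXp : r ∉ Xp := by
    rw [hXp_def]
    rintro (hmem | hmem)
    · exact hrp (by simpa using hmem)
    · exact hnrp ⟨hrp, by rw [hmem.2 p (by simp)]; omega⟩
  have hrXst : r ∉ Xst := by
    rw [hXst_def]
    rintro (hmem | hmem)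
    · simp only [Set.mem_insert_iff, Set.mem_singleton_iff] at hmem
      rcases hmem with rfl | rfl
      · exact hrs rfl
      · exact hrt rfl
    · exact hnrt ⟨hrt, by rw [hmem.2 t (by simp)]; omega⟩
  have hnSstr : ¬ C.Spherical {s, t, r} := fun h2 => hnrt (h2 (by simp) (by simp) hrt)
  have hF1 : ¬ Relation.ReflTransGen (fun x y => x ∉ Xst ∧ y ∉ Xst ∧ C.Adj x y) p r :=
    fun h2 => hGP hnSstr hrXst h2
  have hF2 : ¬ Relation.ReflTransGen (fun x y => x ∉ Xp ∧ y ∉ Xp ∧ C.Adj x y) t r :=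
    fun h2 => hGE hrXp h2 hnrp
  have hJsph : C.Spherical ({s, t, p} : Set S) := by
    apply hsph.mono
    intro x hx
    simp only [Set.mem_insert_iff, Set.mem_singleton_iff] at hx
    rcases hx with rfl | rfl | rfl
    · exact hsL
    · exact htL
    · exact hpL
  have hJirr : C.Irred ({s, t, p} : Set S) := by
    intro K hK hKne hsub
    by_cases htK : t ∈ K
    · have hsK : s ∈ K := by
        rcases hsub (show s ∈ ({s, t, p} : Set S) by simp) with h | h
        · exact h
        · exact absurd (h.2 t htK) hmst
      have hpK : p ∈ K := by
        rcases hsub (show p ∈ ({s, t, p} : Set S) by simp) with h | h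
        · exact h
        · exact absurd ((C.symm t p).trans (h.2 t htK)) hmtp
      apply hK.not_subset
      intro x hx
      simp only [Set.mem_insert_iff, Set.mem_singleton_iff] at hx
      rcases hx with rfl | rfl | rfl
      · exact hsK
      · exact htK
      · exact hpK
    · obtain ⟨j, hj⟩ := hKne
      have htperp : t ∈ C.perp K := by
        rcases hsub (show t ∈ ({s, t, p} : Set S) by simp) with h | h
        · exact absurd h htK
        · exact h
      have hjm := hK.subset hj
      simp only [Set.mem_insert_iff, Set.mem_singleton_iff] at hjm
      rcases hjm with rfl | rfl | rfl
      · exact hmst ((C.symm _ t).trans (htperp.2 _ hj))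
      · exact htK hj
      · exact hmtp (htperp.2 _ hj)
  have hcard : 3 ≤ ({s, t, p} : Set S).ncard := by
    have h3 : ({s, t, p} : Set S).ncard = 3 :=
      Set.ncard_eq_three.mpr ⟨s, t, p, hnst, hnsp, hntp, rfl⟩
    omega
  have hrX3 : r ∉ X3 := by
    rw [hX3_def]
    rintro (hmem | hmem)
    · exact hrmem hmem
    · exact hnrp ⟨hrp, by rw [hmem.2 p (by simp)]; omega⟩
  have key : ∀ a, Relation.ReflTransGen (fun x y => x ∉ X3 ∧ y ∉ X3 ∧ C.Adj x y) a r →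
      a ∉ X3 → ¬ C.Adj a p ∧ a ∉ Xst ∧ a ∉ Xp ∧
        Relation.ReflTransGen (fun x y => x ∉ Xp ∧ y ∉ Xp ∧ C.Adj x y) a r ∧
        Relation.ReflTransGen (fun x y => x ∉ Xst ∧ y ∉ Xst ∧ C.Adj x y) a r := by
    intro a hchain
    induction hchain using Relation.ReflTransGen.head_induction_on with
    | refl =>
      intro _
      exact ⟨hnrp, hrXst, hrXp, Relation.ReflTransGen.refl, Relation.ReflTransGen.refl⟩
    | @head a b hab hbr ih =>
      intro haX
      obtain ⟨-, hbX, hadjab⟩ := hab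
      obtain ⟨hbp, hbXst, hbXp, hbchainP, hbchainSt⟩ := ih hbX
      have hamem : a ∉ ({s, t, p} : Set S) := fun hm => haX (Or.inl hm)
      have hanes : a ≠ s := fun h => hamem (by simp [h])
      have hanet : a ≠ t := fun h => hamem (by simp [h])
      have hanep : a ≠ p := fun h => hamem (by simp [h])
      have hXstCase : a ∈ Xst → C.m a s = 2 ∧ C.m a t = 2 ∧ C.m a p ≠ 2 := by
        intro hmem
        rw [hXst_def] at hmem
        rcases hmem with hmem | hmem
        · simp only [Set.mem_insert_iff, Set.mem_singleton_iff] at hmem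
          rcases hmem with rfl | rfl
          · exact absurd rfl hanes
          · exact absurd rfl hanet
        · refine ⟨hmem.2 s (by simp), hmem.2 t (by simp), ?_⟩
          intro hap2
          apply haX
          refine Or.inr ⟨hamem, ?_⟩
          intro j hj
          simp only [Set.mem_insert_iff, Set.mem_singleton_iff] at hj
          rcases hj with rfl | rfl | rfl
          · exact hmem.2 j (by simp)
          · exact hmem.2 j (by simp)
          · exact hap2
      have hnap : ¬ C.Adj a p := by
        intro hap
        by_cases haXst : a ∈ Xst
        · obtain ⟨has2, hat2, hapne2⟩ := hXstCase haXst
          have haXp : a ∉ Xp := by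
            rw [hXp_def]
            rintro (hmem | hmem)
            · exact hanep (by simpa using hmem)
            · exact hapne2 (hmem.2 p (by simp))
          have hta : C.Adj t a := ⟨fun h => hanet h.symm, by rw [C.symm t a, hat2]; omega⟩
          exact hF2 (Relation.ReflTransGen.head ⟨htXp, haXp, hta⟩
            (Relation.ReflTransGen.head ⟨haXp, hbXp, hadjab⟩ hbchainP))
        · exact hF1 (Relation.ReflTransGen.head ⟨hpXst, haXst, C.adj_symm' hap⟩
            (Relation.ReflTransGen.head ⟨haXst, hbXst, hadjab⟩ hbchainSt))
      have haXp : a ∉ Xp := by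
        rw [hXp_def]
        rintro (hmem | hmem)
        · exact hanep (by simpa using hmem)
        · exact hnap ⟨hanep, by rw [hmem.2 p (by simp)]; omega⟩
      have haXst : a ∉ Xst := by
        intro hmem
        obtain ⟨has2, hat2, -⟩ := hXstCase hmem
        have hta : C.Adj t a := ⟨fun h => hanet h.symm, by rw [C.symm t a, hat2]; omega⟩
        exact hF2 (Relation.ReflTransGen.head ⟨htXp, haXp, hta⟩
          (Relation.ReflTransGen.head ⟨haXp, hbXp, hadjab⟩ hbchainP))
      exact ⟨hnap, haXst, haXp,
        Relation.ReflTransGen.head ⟨haXp, hbXp, hadjab⟩ hbchainP,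
        Relation.ReflTransGen.head ⟨haXst, hbXst, hadjab⟩ hbchainSt⟩
  intro k hkX
  obtain ⟨-, -, hchain⟩ := hrig ({s, t, p} : Set S) hJsph hJirr hcard k r hkX hrX3
  obtain ⟨hkp, hkXst, hkXp, hkchainP, hkchainSt⟩ := key k hchain hkX
  refine ⟨?_, hkp⟩
  intro hkt
  exact hF2 (Relation.ReflTransGen.head ⟨htXp, hkXp, C.adj_symm' hkt⟩ hkchainP)
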